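/- The map (w, g, b) ↦ Q*(w,g,b) = [[I₃ − wwᵀ, g],[gᵀ, −1/b²]] defined on {(w,g,b) : ‖w‖=1, wᵀg=0, b≠0} is invariant precisely under the sign changes (w,g,b) ↦ (±w, g, ±b): Q*(w,g,b) = Q*(w',g',b') if and only if g' = g, w' = ±w, and b' = ±b. -/
import Mathlib


open scoped Matrix

/-- The disk quadric parameterization `(w,g,b) ↦ Q*(w,g,b)`. -/
noncomputable def diskQuadric (w g : Fin 3 → ℝ) (b : ℝ) :
    Matrix (Fin 3 ⊕ Fin 1) (Fin 3 ⊕ Fin 1) ℝ :=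
  Matrix.fromBlocks (1 - Matrix.vecMulVec w w) (Matrix.of fun i _ => g i)
    (Matrix.of fun _ j => g j) (Matrix.of fun _ _ => -1 / b ^ 2)

/-- The parameterization is invariant precisely under the sign changes
`(w,g,b) ↦ (±w, g, ±b)`. -/
theorem diskQuadric_sign_symmetry (w w' g g' : Fin 3 → ℝ) (b b' : ℝ)
    (hw : w ⬝ᵥ w = 1) (hw' : w' ⬝ᵥ w' = 1)
    (hwg : w ⬝ᵥ g = 0) (hwg' : w' ⬝ᵥ g' = 0)
    (hb : b ≠ 0) (hb' : b' ≠ 0) :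
    diskQuadric w g b = diskQuadric w' g' b' ↔
      g' = g ∧ (w' = w ∨ w' = -w) ∧ (b' = b ∨ b' = -b) := by
  constructor
  · intro h
    have hg : g' = g := by
      funext i
      have := congrFun (congrFun h (Sum.inl i)) (Sum.inr 0)
      simpa [diskQuadric] using this.symm
    have hkey : ∀ i j, w i * w j = w' i * w' j := by
      intro i j
      have := congrFun (congrFun h (Sum.inl i)) (Sum.inl j)
      simp [diskQuadric, Matrix.sub_apply, Matrix.vecMulVec_apply] at this
      linarith
    have hbb : -1 / b ^ 2 = -1 / b' ^ 2 := by
      have := congrFun (congrFun h (Sum.inr 0)) (Sum.inr 0)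
      simpa [diskQuadric] using this
    have hb2 : b' ^ 2 = b ^ 2 := by
      field_simp at hbb
      linarith
    refine ⟨hg, ?_, sq_eq_sq_iff_eq_or_eq_neg.mp hb2⟩
    · -- w' = w ∨ w' = -w
      obtain ⟨k, hk⟩ : ∃ k, w k ≠ 0 := by
        by_contra hc
        push_neg at hc
        have : w ⬝ᵥ w = 0 := by
          simp [dotProduct, hc]
        rw [this] at hw; norm_num at hw
      have hk2 : w' k * w' k = w k * w k := (hkey k k).symm
      have hk' : w' k ≠ 0 := by
        intro h0
        rw [h0] at hk2
        exact hk (by nlinarith)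
      rcases sq_eq_sq_iff_eq_or_eq_neg.mp (by nlinarith [hk2] : w' k ^ 2 = w k ^ 2) with hkk | hkk
      · left
        funext i
        have h1 := hkey i k
        rw [hkk] at h1
        exact mul_right_cancel₀ (hkk ▸ hk') h1.symm
      · right
        funext i
        have h1 := hkey i k
        have h2 : w' i * w' k = - w i * w' k := by rw [hkk] at h1 ⊢; linear_combination -h1
        simpa using mul_right_cancel₀ hk' h2
  · rintro ⟨hg, hw2, hb2⟩
    subst hg
    rcases hw2 with rfl | rfl <;> rcases hb2 with rfl | rfl <;>
      simp [diskQuadric, Matrix.vecMulVec, neg_pow]
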